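/- arXiv:1306.2904 — 3 statements merged into one kernel-verified Lean document; each statement's English description precedes it below -/
import Mathlib

section
/- Let T > 0, let r ≥ 1 be an integer and γ > 0 a real number, let s be as in the definition of Q*_{r,γ}, and set q = s/(s−γ) if γ is an integer and q = s/(s−⌊γ⌋−1) if γ is not an integer. For N ∈ ℕ define the graded mesh v_k = T(k/N)^q, k = 0,1,…,N. Then there exists a constant A > 0 (independent of N) such that for every f ∈ Q*_{r,γ}([0,T],1) and every N ≥ 1 there is a continuous function f_N : [0,T] → ℝ which coincides on [v₀,v₁] with a polynomial of degree at most r−1 and coincides on each interval [v_k, v_{k+1}], k = 1,…,N−1, with a polynomial of degree at most s−1, and which satisfies ‖f − f_N‖_{C[0,T]} ≤ A·N^{−s}. -/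
open Set Polynomial

/-- The class `Q*_{r,γ}([0,T], 1)` (one-dimensional case). -/
def MemQStar (T M : ℝ) (r s : ℕ) (ζ : ℝ) (f : ℝ → ℝ) : Prop :=
  ContDiffOn ℝ r f (Set.Icc 0 T) ∧
  ContDiffOn ℝ s f (Set.Ioc 0 T) ∧
  (∀ k : ℕ, k ≤ r → ∀ t ∈ Set.Icc (0:ℝ) T,
      |iteratedDerivWithin k f (Set.Icc 0 T) t| ≤ M) ∧
  (∀ k : ℕ, r < k → k ≤ s → ∀ t ∈ Set.Ioc (0:ℝ) T,
      |iteratedDerivWithin k f (Set.Ioc 0 T) t| ≤ M * t ^ (-((k : ℝ) - r - ζ)))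

/-!
On the first cell `[0, v₁]` of the graded mesh `v k = T (k/N)^q` the Taylor polynomial of degree
`r - 1` at `0` has error at most `v₁ ^ r = T ^ r N ^ (-q r) = T ^ r N ^ (-s)`. On a later cell
`[v k, v (k+1)]` the Taylor polynomial of degree `s - 1` at `v k` has error at most
`v k ^ (-γ) (v (k+1) - v k) ^ s`, since `|f⁽ˢ⁾ t| ≤ t ^ (-γ)` there; by convexity of `x ↦ x ^ q`,
`v (k+1) - v k ≤ T q 2 ^ (q-1) (k/N) ^ (q-1) / N`, and with `q = s / r` all powers of `k/N`
combine into `(k/N) ^ (q ζ) ≤ 1`, leaving `N ^ (-s)`. Adding to each piece the linear interpolant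
of its endpoint errors (a constant on the first cell, so that its degree stays `r - 1`) makes the
pieces agree at the nodes, at the cost of a factor `2`.
-/

open scoped Nat

theorem iteratedDerivWithin_eq_of_subset {f : ℝ → ℝ} {s t : Set ℝ} {n : ℕ} {x : ℝ}
    (hst : s ⊆ t) (hs : UniqueDiffOn ℝ s) (ht : UniqueDiffOn ℝ t) (hf : ContDiffOn ℝ n f t)
    (hx : x ∈ s) : iteratedDerivWithin n f s x = iteratedDerivWithin n f t x := by
  simp only [iteratedDerivWithin_eq_iteratedFDerivWithin,
    iteratedFDerivWithin_subset hst hs ht hf hx]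

theorem exists_polynomial_approx_of_iteratedDerivWithin_le {f : ℝ → ℝ} {S : Set ℝ} {a b M : ℝ}
    {n : ℕ} (hab : a < b) (hS : UniqueDiffOn ℝ S) (habS : Icc a b ⊆ S)
    (hf : ContDiffOn ℝ (n + 1 : ℕ) f S)
    (hM : ∀ y ∈ Icc a b, |iteratedDerivWithin (n + 1) f S y| ≤ M) :
    ∃ p : ℝ[X], p.natDegree ≤ n ∧ ∀ t ∈ Icc a b, |f t - p.eval t| ≤ M * (b - a) ^ (n + 1) := by
  have hM' : ∀ y ∈ Icc a b, ‖iteratedDerivWithin (n + 1) f (Icc a b) y‖ ≤ M := fun y hy => by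
    rw [Real.norm_eq_abs, iteratedDerivWithin_eq_of_subset habS (uniqueDiffOn_Icc hab) hS hf hy]
    exact hM y hy
  have hM0 : 0 ≤ M := (abs_nonneg _).trans (hM a (left_mem_Icc.2 hab.le))
  set p : ℝ[X] := ∑ k ∈ Finset.range (n + 1),
    C (iteratedDerivWithin k f (Icc a b) a / k !) * (X - C a) ^ k
  have hp : ∀ t, p.eval t = taylorWithinEval f n (Icc a b) a t := fun t => by
    simp only [p, taylor_within_apply, eval_finsetSum, eval_mul, eval_C, eval_pow, eval_sub,
      eval_X, smul_eq_mul]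
    exact Finset.sum_congr rfl fun k _ => by ring
  refine ⟨p, ?_, fun t ht => ?_⟩
  · refine natDegree_sum_le_of_forall_le _ _ fun k hk => natDegree_C_mul_le _ _ |>.trans ?_
    simpa using Finset.mem_range_succ_iff.1 hk
  have hta : 0 ≤ t - a := sub_nonneg.2 ht.1
  rw [hp, ← Real.norm_eq_abs]
  calc ‖f t - taylorWithinEval f n (Icc a b) a t‖ ≤ M * (t - a) ^ (n + 1) / n ! :=
        taylor_mean_remainder_bound hab.le (hf.mono habS) ht hM'
    _ ≤ M * (t - a) ^ (n + 1) := div_le_self (by positivity) (by exact_mod_cast n.factorial_pos)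
    _ ≤ M * (b - a) ^ (n + 1) := by gcongr; exact ht.2

theorem exists_polynomial_eval_right_eq {f : ℝ → ℝ} {p : ℝ[X]} {a b ε : ℝ} (hab : a ≤ b)
    (hp : ∀ t ∈ Icc a b, |f t - p.eval t| ≤ ε) :
    ∃ p' : ℝ[X], p'.natDegree ≤ p.natDegree ∧ p'.eval b = f b ∧
      ∀ t ∈ Icc a b, |f t - p'.eval t| ≤ 2 * ε := by
  refine ⟨p + C (f b - p.eval b), by rw [natDegree_add_C], by simp, fun t ht => ?_⟩
  have hb := hp b (right_mem_Icc.2 hab)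
  calc |f t - (p + C (f b - p.eval b)).eval t|
      = |(f t - p.eval t) - (f b - p.eval b)| := by simp only [eval_add, eval_C]; ring_nf
    _ ≤ |f t - p.eval t| + |f b - p.eval b| := abs_sub _ _
    _ ≤ 2 * ε := by linarith [hp t ht]

theorem exists_polynomial_eval_left_right_eq {f : ℝ → ℝ} {p : ℝ[X]} {a b ε : ℝ} (hab : a < b)
    (hp : ∀ t ∈ Icc a b, |f t - p.eval t| ≤ ε) :
    ∃ p' : ℝ[X], p'.natDegree ≤ max p.natDegree 1 ∧ p'.eval a = f a ∧ p'.eval b = f b ∧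
      ∀ t ∈ Icc a b, |f t - p'.eval t| ≤ 2 * ε := by
  set ea := f a - p.eval a
  set eb := f b - p.eval b
  have hba : b - a ≠ 0 := sub_ne_zero.2 hab.ne'
  let ℓ : ℝ[X] := C (ea / (b - a)) * (C b - X) + C (eb / (b - a)) * (X - C a)
  have hℓ : ∀ t, ℓ.eval t = (ea * (b - t) + eb * (t - a)) / (b - a) := fun t => by
    simp only [ℓ, eval_add, eval_mul, eval_C, eval_sub, eval_X]
    field_simp
  have hℓdeg : ℓ.natDegree ≤ 1 := by
    refine natDegree_add_le_of_degree_le (natDegree_C_mul_le _ _ |>.trans ?_)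
      (natDegree_C_mul_le _ _ |>.trans ?_)
    · exact natDegree_sub_le _ _ |>.trans (by simp)
    · exact natDegree_sub_le _ _ |>.trans (by simp)
  refine ⟨p + ℓ,
    natDegree_add_le_of_degree_le (le_max_left _ _) (hℓdeg.trans (le_max_right _ _)),
    ?_, ?_, fun t ht => ?_⟩
  · rw [eval_add, hℓ]; field_simp; ring
  · rw [eval_add, hℓ]; field_simp; ring
  have hea := hp a (left_mem_Icc.2 hab.le)
  have heb := hp b (right_mem_Icc.2 hab.le)
  have hbt : 0 ≤ b - t := by linarith [ht.2]
  have hta : 0 ≤ t - a := by linarith [ht.1]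
  have hℓt : |ℓ.eval t| ≤ ε := by
    rw [hℓ, abs_div, abs_of_pos (sub_pos.2 hab), div_le_iff₀ (sub_pos.2 hab)]
    calc |ea * (b - t) + eb * (t - a)| ≤ |ea| * (b - t) + |eb| * (t - a) := by
          refine (abs_add_le _ _).trans_eq ?_
          rw [abs_mul, abs_mul, abs_of_nonneg hbt, abs_of_nonneg hta]
      _ ≤ ε * (b - t) + ε * (t - a) := by gcongr
      _ = ε * (b - a) := by ring
  calc |f t - (p + ℓ).eval t| = |(f t - p.eval t) - ℓ.eval t| := by rw [eval_add]; ring_nf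
    _ ≤ |f t - p.eval t| + |ℓ.eval t| := abs_sub _ _
    _ ≤ 2 * ε := by linarith [hp t ht]

noncomputable def gluePieces (v : ℕ → ℝ) (P : ℕ → ℝ → ℝ) : ℕ → ℝ → ℝ
  | 0, t => P 0 t
  | n + 1, t => if t ≤ v (n + 1) then gluePieces v P n t else P (n + 1) t

section gluePieces

variable {v : ℕ → ℝ} {P : ℕ → ℝ → ℝ}

theorem gluePieces_eq (hv : Monotone v) {n : ℕ}
    (hP : ∀ k < n, P k (v (k + 1)) = P (k + 1) (v (k + 1))) {j : ℕ} (hj : j ≤ n) {t : ℝ}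
    (ht : t ∈ Icc (v j) (v (j + 1))) : gluePieces v P n t = P j t := by
  induction n generalizing j with
  | zero => rw [Nat.le_zero.1 hj]; rfl
  | succ n ih =>
    have ih' := fun {j} => ih (fun k hk => hP k (hk.trans n.lt_succ_self)) (j := j)
    by_cases htn : t ≤ v (n + 1)
    · rw [gluePieces, if_pos htn]
      rcases hj.lt_or_eq with hj | rfl
      · exact ih' (Nat.lt_succ_iff.1 hj) ht
      · obtain rfl := le_antisymm htn ht.1
        rw [ih' le_rfl ⟨hv n.le_succ, le_rfl⟩, hP n n.lt_succ_self]
    · rw [gluePieces, if_neg htn]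
      obtain rfl : j = n + 1 := hj.antisymm <| by
        by_contra! hjn
        exact htn (ht.2.trans (hv hjn))
      rfl

theorem continuous_gluePieces (hv : Monotone v) {n : ℕ}
    (hP : ∀ k < n, P k (v (k + 1)) = P (k + 1) (v (k + 1))) (hPc : ∀ k, Continuous (P k)) :
    Continuous (gluePieces v P n) := by
  induction n with
  | zero => exact hPc 0
  | succ n ih =>
    refine Continuous.if_le (ih fun k hk => hP k (hk.trans n.lt_succ_self)) (hPc (n + 1))
      continuous_id continuous_const fun t ht => ?_
    rw [ht, gluePieces_eq hv (fun k hk => hP k (hk.trans n.lt_succ_self)) le_rfl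
      ⟨hv n.le_succ, le_rfl⟩, hP n n.lt_succ_self]

end gluePieces

theorem exists_mem_Icc_succ_of_mem_Icc {v : ℕ → ℝ} {n : ℕ} {t : ℝ}
    (ht : t ∈ Icc (v 0) (v (n + 1))) : ∃ j ≤ n, t ∈ Icc (v j) (v (j + 1)) := by
  induction n with
  | zero => exact ⟨0, le_rfl, ht⟩
  | succ n ih =>
    by_cases htn : t ≤ v (n + 1)
    · obtain ⟨j, hj, htj⟩ := ih ⟨ht.1, htn⟩
      exact ⟨j, hj.trans n.le_succ, htj⟩
    · exact ⟨n + 1, le_rfl, (not_le.1 htn).le, ht.2⟩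

theorem exists_continuous_piecewise_polynomial_approx {f : ℝ → ℝ} {v : ℕ → ℝ}
    (hv : StrictMono v) {n : ℕ} {d : ℕ → ℕ} (hd : ∀ k, k ≠ 0 → 1 ≤ d k) {ε : ℝ}
    (happrox : ∀ k ≤ n, ∃ p : ℝ[X], p.natDegree ≤ d k ∧
      ∀ t ∈ Icc (v k) (v (k + 1)), |f t - p.eval t| ≤ ε) :
    ∃ g : ℝ → ℝ, Continuous g ∧
      (∀ k ≤ n, ∃ p : ℝ[X], p.natDegree ≤ d k ∧ ∀ t ∈ Icc (v k) (v (k + 1)), g t = p.eval t) ∧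
      ∀ t ∈ Icc (v 0) (v (n + 1)), |f t - g t| ≤ 2 * ε := by
  have hinterp : ∀ k ≤ n, ∃ p : ℝ[X], p.natDegree ≤ d k ∧
      (k ≠ 0 → p.eval (v k) = f (v k)) ∧ p.eval (v (k + 1)) = f (v (k + 1)) ∧
      ∀ t ∈ Icc (v k) (v (k + 1)), |f t - p.eval t| ≤ 2 * ε := by
    intro k hk
    obtain ⟨p, hpd, hp⟩ := happrox k hk
    rcases eq_or_ne k 0 with rfl | hk0
    · obtain ⟨p', hp'd, hp'b, hp'⟩ :=
        exists_polynomial_eval_right_eq (hv.monotone zero_le_one) hp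
      exact ⟨p', hp'd.trans hpd, absurd rfl, hp'b, hp'⟩
    · obtain ⟨p', hp'd, hp'a, hp'b, hp'⟩ :=
        exists_polynomial_eval_left_right_eq (hv k.lt_succ_self) hp
      exact ⟨p', hp'd.trans (max_le hpd (hd k hk0)), fun _ => hp'a, hp'b, hp'⟩
  choose! p hpd hpa hpb hp using hinterp
  have hmatch : ∀ k < n, (p k).eval (v (k + 1)) = (p (k + 1)).eval (v (k + 1)) :=
    fun k hk => by rw [hpb k hk.le, hpa (k + 1) hk k.succ_ne_zero]
  refine ⟨gluePieces v (fun k => (p k).eval) n,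
    continuous_gluePieces hv.monotone hmatch fun k => (p k).continuous,
    fun k hk => ⟨p k, hpd k hk, fun t ht => gluePieces_eq hv.monotone hmatch hk ht⟩,
    fun t ht => ?_⟩
  obtain ⟨j, hj, htj⟩ := exists_mem_Icc_succ_of_mem_Icc ht
  rw [gluePieces_eq hv.monotone hmatch hj htj]
  exact hp j hj t htj

theorem rpow_sub_rpow_le_mul_sub {a b q : ℝ} (ha : 0 ≤ a) (hab : a < b) (hq : 1 ≤ q) :
    b ^ q - a ^ q ≤ q * b ^ (q - 1) * (b - a) := by
  have hslope := (convexOn_rpow hq).slope_le_of_hasDerivAt (mem_Ici.2 ha)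
    (mem_Ici.2 (ha.trans hab.le)) hab (Real.hasDerivAt_rpow_const (Or.inr hq))
  rwa [slope_def_field, div_le_iff₀ (sub_pos.2 hab)] at hslope

noncomputable def gradedMesh (T q : ℝ) (N k : ℕ) : ℝ := T * ((k : ℝ) / N) ^ q

section gradedMesh

variable {T q : ℝ} {N : ℕ}

theorem gradedMesh_zero (hq : q ≠ 0) : gradedMesh T q N 0 = 0 := by
  simp [gradedMesh, Real.zero_rpow hq]

theorem gradedMesh_self (hN : N ≠ 0) : gradedMesh T q N N = T := by
  simp [gradedMesh, hN]

theorem gradedMesh_strictMono (hT : 0 < T) (hq : 0 < q) (hN : N ≠ 0) :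
    StrictMono (gradedMesh T q N) := fun i j hij => by
  unfold gradedMesh
  gcongr

theorem gradedMesh_one_pow (r : ℕ) :
    gradedMesh T q N 1 ^ r = T ^ r * (N : ℝ) ^ (-(q * r)) := by
  rw [gradedMesh, Nat.cast_one, mul_pow, ← Real.rpow_natCast (_ ^ q),
    ← Real.rpow_mul (by positivity), one_div, Real.inv_rpow (Nat.cast_nonneg N),
    ← Real.rpow_neg (Nat.cast_nonneg N)]

theorem gradedMesh_rpow_neg_mul_sub_pow_le (hT : 0 < T) (hq : 1 ≤ q) {γ : ℝ} {s : ℕ}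
    (hqs : s ≤ q * (s - γ)) {k : ℕ} (hk : 1 ≤ k) (hkN : k ≤ N) :
    gradedMesh T q N k ^ (-γ) * (gradedMesh T q N (k + 1) - gradedMesh T q N k) ^ s ≤
      T ^ (-γ) * (T * q * 2 ^ (q - 1)) ^ s * (N : ℝ) ^ (-(s : ℝ)) := by
  have hN0 : N ≠ 0 := by omega
  have hN : (0 : ℝ) < N := by positivity
  set u : ℝ := k / N
  set w : ℝ := (k + 1) / N
  have hu : 0 < u := by positivity
  have hu1 : u ≤ 1 := div_le_one_of_le₀ (by exact_mod_cast hkN) hN.le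
  have huw : u < w := div_lt_div_of_pos_right (by linarith) hN
  have hw2u : w ≤ 2 * u := by
    rw [← mul_div_assoc, div_le_div_iff_of_pos_right hN]
    linarith [(by exact_mod_cast hk : (1 : ℝ) ≤ k)]
  have hstep : gradedMesh T q N (k + 1) - gradedMesh T q N k ≤
      T * q * 2 ^ (q - 1) * u ^ (q - 1) / N :=
    calc gradedMesh T q N (k + 1) - gradedMesh T q N k = T * (w ^ q - u ^ q) := by
          simp only [gradedMesh, w, u]; push_cast; ring
      _ ≤ T * (q * w ^ (q - 1) * (w - u)) := by
          gcongr; exact rpow_sub_rpow_le_mul_sub hu.le huw hq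
      _ ≤ T * (q * (2 * u) ^ (q - 1) * (w - u)) := by gcongr
      _ = T * q * 2 ^ (q - 1) * u ^ (q - 1) / N := by
          rw [Real.mul_rpow zero_le_two hu.le]
          simp only [w, u]
          field_simp
          ring
  have hexp : 0 ≤ (q - 1) * s - q * γ := by nlinarith
  have hsplit : u ^ ((q - 1) * s - q * γ) = (u ^ (q - 1)) ^ s * (u ^ q) ^ (-γ) := by
    rw [Real.rpow_sub hu, Real.rpow_mul hu.le, Real.rpow_natCast, Real.rpow_mul hu.le,
      Real.rpow_neg (Real.rpow_nonneg hu.le q), div_eq_mul_inv]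
  calc gradedMesh T q N k ^ (-γ) * (gradedMesh T q N (k + 1) - gradedMesh T q N k) ^ s
      ≤ (T * u ^ q) ^ (-γ) * (T * q * 2 ^ (q - 1) * u ^ (q - 1) / N) ^ s := by
        refine mul_le_mul_of_nonneg_left (pow_le_pow_left₀ ?_ hstep s)
          (Real.rpow_nonneg (mul_nonneg hT.le (Real.rpow_nonneg hu.le q)) _)
        exact sub_nonneg.2 ((gradedMesh_strictMono hT (by linarith) hN0).monotone k.le_succ)
    _ = T ^ (-γ) * (T * q * 2 ^ (q - 1)) ^ s * (N : ℝ) ^ (-(s : ℝ)) *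
          u ^ ((q - 1) * s - q * γ) := by
        rw [hsplit, Real.mul_rpow hT.le (by positivity), Real.rpow_neg hN.le, Real.rpow_natCast,
          div_pow, mul_pow]
        field_simp
    _ ≤ T ^ (-γ) * (T * q * 2 ^ (q - 1)) ^ s * (N : ℝ) ^ (-(s : ℝ)) * 1 := by
        gcongr
        exact Real.rpow_le_one hu.le hu1 hexp
    _ = T ^ (-γ) * (T * q * 2 ^ (q - 1)) ^ s * (N : ℝ) ^ (-(s : ℝ)) := mul_one _

end gradedMesh

namespace MemQStar

variable {T M ζ : ℝ} {r s : ℕ} {f : ℝ → ℝ}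

theorem nonneg (hf : MemQStar T M r s ζ f) (hT : 0 ≤ T) : 0 ≤ M :=
  (abs_nonneg _).trans (hf.2.2.1 0 (Nat.zero_le r) 0 ⟨le_rfl, hT⟩)

theorem exists_polynomial_approx_Icc_zero (hf : MemQStar T M r s ζ f) (hr : 1 ≤ r) {h : ℝ}
    (hh : 0 < h) (hhT : h ≤ T) :
    ∃ p : ℝ[X], p.natDegree ≤ r - 1 ∧ ∀ t ∈ Icc 0 h, |f t - p.eval t| ≤ M * h ^ r := by
  obtain ⟨n, rfl⟩ : ∃ n, r = n + 1 := ⟨r - 1, by omega⟩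
  simpa using exists_polynomial_approx_of_iteratedDerivWithin_le hh
    (uniqueDiffOn_Icc (hh.trans_le hhT)) (Icc_subset_Icc_right hhT) hf.1
    fun y hy => hf.2.2.1 (n + 1) le_rfl y ⟨hy.1, hy.2.trans hhT⟩

theorem exists_polynomial_approx_Icc (hf : MemQStar T M r s ζ f) (hrs : r < s)
    (hζs : (r : ℝ) + ζ ≤ s) {a b : ℝ} (ha : 0 < a) (hab : a < b) (hbT : b ≤ T) :
    ∃ p : ℝ[X], p.natDegree ≤ s - 1 ∧
      ∀ t ∈ Icc a b, |f t - p.eval t| ≤ M * a ^ (-((s : ℝ) - r - ζ)) * (b - a) ^ s := by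
  have hM := hf.nonneg (ha.trans hab |>.trans_le hbT).le
  obtain ⟨n, rfl⟩ : ∃ n, s = n + 1 := ⟨s - 1, by omega⟩
  simpa using exists_polynomial_approx_of_iteratedDerivWithin_le hab (uniqueDiffOn_Ioc 0 T)
    (fun y hy => ⟨ha.trans_le hy.1, hy.2.trans hbT⟩) hf.2.1 fun y hy =>
      (hf.2.2.2 (n + 1) hrs le_rfl y ⟨ha.trans_le hy.1, hy.2.trans hbT⟩).trans <|
        mul_le_mul_of_nonneg_left
          (Real.rpow_le_rpow_of_nonpos ha hy.1 (by push_cast at hζs ⊢; linarith)) hM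

theorem exists_polynomial_approx_gradedMesh (hf : MemQStar T M r s ζ f) (hT : 0 < T)
    (hr : 1 ≤ r) (hζ : 0 ≤ ζ) (hrs : (r : ℝ) + ζ < s) {q : ℝ} (hqr : q * r = s) {N k : ℕ}
    (hkN : k + 1 ≤ N) :
    ∃ p : ℝ[X], p.natDegree ≤ (if k = 0 then r - 1 else s - 1) ∧
      ∀ t ∈ Icc (gradedMesh T q N k) (gradedMesh T q N (k + 1)), |f t - p.eval t| ≤
        M * (T ^ r + T ^ (-((s : ℝ) - r - ζ)) * (T * q * 2 ^ (q - 1)) ^ s) *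
          (N : ℝ) ^ (-(s : ℝ)) := by
  have hM := hf.nonneg hT.le
  have hr0 : (0 : ℝ) < r := by exact_mod_cast hr
  have hq : 1 ≤ q := by nlinarith
  have hv := gradedMesh_strictMono (q := q) (N := N) hT (by linarith) (by omega)
  have hv0 : gradedMesh T q N 0 = 0 := gradedMesh_zero (by linarith)
  have hvT : ∀ j ≤ N, gradedMesh T q N j ≤ T := fun j hj =>
    (hv.monotone hj).trans_eq (gradedMesh_self (by omega))
  rcases Nat.eq_zero_or_pos k with rfl | hk
  · obtain ⟨p, hpd, hp⟩ := hf.exists_polynomial_approx_Icc_zero hr (hv0 ▸ hv zero_lt_one)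
      (hvT 1 hkN)
    refine ⟨p, by simpa using hpd, fun t ht => ?_⟩
    rw [hv0] at ht
    refine (hp t ht).trans ?_
    rw [gradedMesh_one_pow, hqr, mul_assoc]
    gcongr
    exact le_add_of_nonneg_right (by positivity)
  · have hrs' : r < s := by exact_mod_cast (by linarith : (r : ℝ) < s)
    obtain ⟨p, hpd, hp⟩ := hf.exists_polynomial_approx_Icc hrs' hrs.le (hv0 ▸ hv hk)
      (hv k.lt_succ_self) (hvT _ hkN)
    refine ⟨p, by simpa [hk.ne'] using hpd, fun t ht => (hp t ht).trans ?_⟩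
    rw [mul_assoc, mul_assoc]
    refine mul_le_mul_of_nonneg_left
      ((gradedMesh_rpow_neg_mul_sub_pow_le hT hq ?_ hk (k.le_succ.trans hkN)).trans ?_) hM
    · rw [← hqr]; nlinarith
    · gcongr
      exact le_add_of_nonneg_left (by positivity)

end MemQStar

theorem qStar_exponents {r s : ℕ} {γ ζ q : ℝ} (hγ : 0 < γ)
    (hsζ : ((∃ n : ℤ, γ = n) ∧ (s : ℝ) = r + γ ∧ ζ = 0) ∨
      ((¬ ∃ n : ℤ, γ = n) ∧ (s : ℝ) = r + ⌊γ⌋ + 1 ∧ ζ = 1 - Int.fract γ))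
    (hq : ((∃ n : ℤ, γ = n) ∧ q = s / ((s : ℝ) - γ)) ∨
      ((¬ ∃ n : ℤ, γ = n) ∧ q = s / ((s : ℝ) - ⌊γ⌋ - 1))) :
    0 ≤ ζ ∧ (r : ℝ) + ζ < s ∧ q = s / r := by
  rcases hsζ with ⟨hint, hs, rfl⟩ | ⟨hint, hs, rfl⟩
  · obtain ⟨-, rfl⟩ := hq.resolve_right fun h => h.1 hint
    exact ⟨le_rfl, by linarith, by rw [show (s : ℝ) - γ = r by linarith]⟩
  · obtain ⟨-, rfl⟩ := hq.resolve_left fun h => hint h.1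
    refine ⟨by linarith [Int.fract_lt_one γ], by linarith [Int.floor_add_fract γ], ?_⟩
    rw [show (s : ℝ) - ⌊γ⌋ - 1 = r by linarith]

theorem spline_approx_QStar
    (T : ℝ) (hT : 0 < T) (r s : ℕ) (γ ζ : ℝ) (hr : 1 ≤ r) (hγ : 0 < γ)
    (hsζ : ((∃ n : ℤ, γ = n) ∧ (s : ℝ) = r + γ ∧ ζ = 0) ∨
           ((¬ ∃ n : ℤ, γ = n) ∧ (s : ℝ) = r + ⌊γ⌋ + 1 ∧ ζ = 1 - Int.fract γ))
    (q : ℝ)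
    (hq : ((∃ n : ℤ, γ = n) ∧ q = s / ((s : ℝ) - γ)) ∨
          ((¬ ∃ n : ℤ, γ = n) ∧ q = s / ((s : ℝ) - ⌊γ⌋ - 1))) :
    ∃ A : ℝ, 0 < A ∧
      ∀ f : ℝ → ℝ, MemQStar T 1 r s ζ f →
      ∀ N : ℕ, 1 ≤ N →
        -- the graded mesh `v k = T (k/N)^q`
        ∃ fN : ℝ → ℝ, ContinuousOn fN (Set.Icc 0 T) ∧
          (∃ p : Polynomial ℝ, p.natDegree ≤ r - 1 ∧
            ∀ t ∈ Set.Icc (T * ((0 : ℝ) / N) ^ q) (T * ((1 : ℝ) / N) ^ q),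
              fN t = p.eval t) ∧
          (∀ k : ℕ, 1 ≤ k → k ≤ N - 1 →
            ∃ p : Polynomial ℝ, p.natDegree ≤ s - 1 ∧
              ∀ t ∈ Set.Icc (T * ((k : ℝ) / N) ^ q) (T * (((k : ℝ) + 1) / N) ^ q),
                fN t = p.eval t) ∧
          ∀ t ∈ Set.Icc (0:ℝ) T, |f t - fN t| ≤ A * (N : ℝ) ^ (-(s : ℝ)) := by
  obtain ⟨hζ, hrs, hqs⟩ := qStar_exponents hγ hsζ hq
  have hr0 : (0 : ℝ) < r := by exact_mod_cast hr
  have hrs' : r < s := by exact_mod_cast (by linarith : (r : ℝ) < s)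
  have hqr : q * r = s := by rw [hqs]; field_simp
  have hq0 : 0 < q := by rw [hqs]; exact div_pos (by linarith) hr0
  set C := T ^ r + T ^ (-((s : ℝ) - r - ζ)) * (T * q * 2 ^ (q - 1)) ^ s
  refine ⟨2 * C, by positivity, fun f hf N hN => ?_⟩
  obtain ⟨g, hg, hgpoly, hgerr⟩ := exists_continuous_piecewise_polynomial_approx
    (gradedMesh_strictMono hT hq0 (N := N) (by omega)) (n := N - 1)
    (d := fun k => if k = 0 then r - 1 else s - 1) (fun k hk => by simp only [if_neg hk]; omega)
    fun k hk => hf.exists_polynomial_approx_gradedMesh hT hr hζ hrs hqr (by omega)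
  rw [gradedMesh_zero hq0.ne', Nat.sub_add_cancel hN, gradedMesh_self (by omega)] at hgerr
  refine ⟨g, hg.continuousOn, ?_, fun k hk hkN => ?_, fun t ht => ?_⟩
  · simpa [gradedMesh] using hgpoly 0 (Nat.zero_le _)
  · obtain ⟨p, hpd, hp⟩ := hgpoly k hkN
    refine ⟨p, by simpa [show k ≠ 0 by omega] using hpd, fun t ht => hp t ?_⟩
    simpa [gradedMesh] using ht
  · exact (hgerr t ht).trans_eq (by ring)
end

section
/- Let a > 0 and let m ≥ 4 be an integer. Consider the m interpolation nodes x₀ = −a, x_{m−1} = a, and x_i = a·cos((2i−1)π/(2(m−2))) for i = 1,…,m−2 (the roots of the Chebyshev polynomial of the first kind of degree m−2 scaled to [−a,a]). Let ψ_i(t) = ∏_{j≠i}(t−x_j)/(x_i−x_j) be the Lagrange fundamental polynomials for these nodes, and let λ_m = max_{t∈[−a,a]} Σ_{i=0}^{m−1} |ψ_i(t)| be the Lebesgue constant. Then there exists an absolute constant C > 0 (independent of a and m) such that λ_m ≤ C·m²·ln m. -/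
/-!
Rescale to `a = 1` and write `n = m - 2`. The nodal polynomial of the nodes is
`2^(1-n) (X² - 1) T_n`, so off the node `x_i` the fundamental function is
`ψ_i(t) = Ω(t) / (Ω'(x_i) (t - x_i))` with `Ω = (X² - 1) T_n`. At the endpoints `|Ω'(±1)| = 2`
and `|Ω(t)| ≤ 2 |t ∓ 1|`, so `|ψ_i| ≤ 1`. At an interior node `x_i = cos θ`, writing `t = cos φ`,
`|ψ_i(t)| = sin² φ |cos nφ| / (n sin θ |cos φ - cos θ|)`. Since `cos nθ = 0`, the product
formula for `cos nφ - cos nθ` together with `|sin nx| ≤ n |sin x|` and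
`sin φ ≤ 2 sin ((φ + θ)/2)` bounds this by `2 / sin θ ≤ 2n`. Summing,
`λ_m ≤ 2m(m - 2) ≤ 2m² ≤ 2m² ln m`.
-/

open Set Real Finset

/-- The interpolation nodes on `[-a, a]`: the endpoints `±a` together with the roots of
the Chebyshev polynomial of the first kind of degree `m - 2` scaled to `[-a, a]`. -/
noncomputable def chebClosedNode (a : ℝ) (m : ℕ) (i : Fin m) : ℝ :=
  if (i : ℕ) = 0 then -a
  else if (i : ℕ) = m - 1 then a
  else a * Real.cos ((2 * ((i : ℕ) : ℝ) - 1) * Real.pi / (2 * ((m : ℝ) - 2)))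

/-- The Lagrange fundamental polynomial for the node system `chebClosedNode a m`. -/
noncomputable def lagrangeFund (a : ℝ) (m : ℕ) (i : Fin m) (t : ℝ) : ℝ :=
  ∏ j ∈ Finset.univ.erase i,
    (t - chebClosedNode a m j) / (chebClosedNode a m i - chebClosedNode a m j)

open Polynomial

namespace Real

theorem abs_sin_nat_mul_le (n : ℕ) (x : ℝ) : |sin (n * x)| ≤ n * |sin x| := by
  induction n with
  | zero => simp
  | succ k ih =>
    calc |sin ((k + 1 : ℕ) * x)| = |sin (k * x) * cos x + cos (k * x) * sin x| := by
          rw [← sin_add]; push_cast; ring_nf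
      _ ≤ |sin (k * x)| * |cos x| + |cos (k * x)| * |sin x| := by
          simpa only [abs_mul] using abs_add_le (sin (k * x) * cos x) (cos (k * x) * sin x)
      _ ≤ k * |sin x| * 1 + 1 * |sin x| := by
          gcongr
          · exact abs_cos_le_one x
          · exact abs_cos_le_one _
      _ = (k + 1 : ℕ) * |sin x| := by push_cast; ring

theorem abs_sin_half_add_mul_abs_cos_nat_mul_sub_le (n : ℕ) (φ θ : ℝ) :
    |sin ((φ + θ) / 2)| * |cos (n * φ) - cos (n * θ)| ≤ n * |cos φ - cos θ| := by
  have hsin := abs_sin_nat_mul_le n ((φ - θ) / 2)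
  rw [cos_sub_cos, cos_sub_cos, ← mul_add, ← mul_sub, mul_div_assoc, mul_div_assoc]
  simp only [abs_mul, abs_neg, abs_two]
  calc |sin ((φ + θ) / 2)| * (2 * |sin (n * ((φ + θ) / 2))| * |sin (n * ((φ - θ) / 2))|)
      ≤ |sin ((φ + θ) / 2)| * (2 * 1 * (n * |sin ((φ - θ) / 2)|)) := by
        gcongr
        exact abs_sin_le_one _
    _ = n * (2 * |sin ((φ + θ) / 2)| * |sin ((φ - θ) / 2)|) := by ring

theorem sin_le_two_mul_sin_half_add {φ θ : ℝ} (hφ : φ ∈ Icc 0 π) (hθ : θ ∈ Icc 0 π) :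
    sin φ ≤ 2 * sin ((φ + θ) / 2) := by
  have hs : 0 ≤ sin ((φ + θ) / 2) :=
    sin_nonneg_of_nonneg_of_le_pi (by linarith [hφ.1, hθ.1]) (by linarith [hφ.2, hθ.2])
  nlinarith [sin_add_sin φ θ, sin_nonneg_of_nonneg_of_le_pi hθ.1 hθ.2, cos_le_one ((φ - θ) / 2)]

theorem sin_sq_mul_abs_cos_nat_mul_le {n : ℕ} {φ θ : ℝ} (hφ : φ ∈ Icc 0 π) (hθ : θ ∈ Icc 0 π)
    (hθn : cos (n * θ) = 0) : sin φ ^ 2 * |cos (n * φ)| ≤ 2 * n * |cos φ - cos θ| := by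
  have hs : 0 ≤ sin ((φ + θ) / 2) :=
    sin_nonneg_of_nonneg_of_le_pi (by linarith [hφ.1, hθ.1]) (by linarith [hφ.2, hθ.2])
  have key := abs_sin_half_add_mul_abs_cos_nat_mul_sub_le n φ θ
  rw [hθn, sub_zero, abs_of_nonneg hs] at key
  have hsin_sq : sin φ ^ 2 ≤ 2 * sin ((φ + θ) / 2) := by
    nlinarith [sin_le_two_mul_sin_half_add hφ hθ, sin_le_one φ,
      sin_nonneg_of_nonneg_of_le_pi hφ.1 hφ.2]
  calc sin φ ^ 2 * |cos (n * φ)| ≤ 2 * sin ((φ + θ) / 2) * |cos (n * φ)| := by gcongr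
    _ ≤ 2 * n * |cos φ - cos θ| := by linarith

end Real

theorem Lagrange.prod_erase_sub_div_sub_eq {F ι : Type*} [Field F] [DecidableEq ι] {s : Finset ι}
    {v : ι → F} {i : ι} (hi : i ∈ s) {t : F} (ht : t ≠ v i) :
    ∏ j ∈ s.erase i, (t - v j) / (v i - v j)
      = (nodal s v).eval t / ((derivative (nodal s v)).eval (v i) * (t - v i)) := by
  have h := Lagrange.eval_basis_not_at_node hi ht
  rw [Lagrange.nodalWeight_eq_eval_derivative_nodal hi] at h
  rw [div_eq_mul_inv, mul_inv, ← h]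
  simp [Lagrange.basis, Lagrange.basisDivisor, eval_prod, div_eq_inv_mul]

theorem abs_prod_div_self_le_one {ι : Type*} (s : Finset ι) (f : ι → ℝ) :
    |∏ j ∈ s, f j / f j| ≤ 1 := by
  rw [abs_prod]
  exact prod_le_one (fun _ _ => abs_nonneg _) fun j _ => by rw [abs_div]; exact div_self_le_one _

-- `cos (chebRootAngle n k)` for `k < n` are the roots of `T n`, indexed from `0` as in
-- `Polynomial.Chebyshev.roots_T_real` (`chebClosedNode` indexes them from `1`).
noncomputable def chebRootAngle (n k : ℕ) : ℝ := (2 * k + 1) * π / (2 * n)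

theorem chebRootAngle_mem_Icc {n k : ℕ} (hk : k < n) :
    chebRootAngle n k ∈ Icc (π / (2 * n)) (π - π / (2 * n)) := by
  have hn : (0 : ℝ) < n := by exact_mod_cast (Nat.zero_lt_of_lt hk)
  have hk' : (k : ℝ) + 1 ≤ n := by exact_mod_cast hk
  unfold chebRootAngle
  constructor
  · gcongr
    nlinarith [pi_pos, (k.cast_nonneg : (0 : ℝ) ≤ k)]
  · rw [div_le_iff₀ (by positivity), sub_mul, div_mul_cancel₀ _ (by positivity)]
    nlinarith [pi_pos]

theorem chebRootAngle_mem_Icc_zero_pi {n k : ℕ} (hk : k < n) :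
    chebRootAngle n k ∈ Icc 0 π := by
  have hn : (0 : ℝ) < n := by exact_mod_cast (Nat.zero_lt_of_lt hk)
  have h := chebRootAngle_mem_Icc hk
  have : 0 ≤ π / (2 * n) := by positivity
  exact ⟨by linarith [h.1], by linarith [h.2]⟩

theorem cos_nat_mul_chebRootAngle {n : ℕ} (hn : n ≠ 0) (k : ℕ) :
    cos (n * chebRootAngle n k) = 0 := by
  rw [cos_eq_zero_iff]
  exact ⟨k, by unfold chebRootAngle; field_simp; push_cast; ring⟩

theorem one_le_nat_mul_sin_chebRootAngle {n k : ℕ} (hk : k < n) :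
    1 ≤ n * sin (chebRootAngle n k) := by
  have hn : (0 : ℝ) < n := by exact_mod_cast (Nat.zero_lt_of_lt hk)
  obtain ⟨hlo, hhi⟩ := chebRootAngle_mem_Icc hk
  suffices 1 / n ≤ sin (chebRootAngle n k) by rwa [div_le_iff₀' hn] at this
  have hjordan : ∀ x, π / (2 * n) ≤ x → x ≤ π / 2 → 1 / n ≤ sin x := fun x h₁ h₂ =>
    calc 1 / (n : ℝ) = 2 / π * (π / (2 * n)) := by field_simp
      _ ≤ 2 / π * x := by gcongr
      _ ≤ sin x := mul_le_sin (by linarith [h₁, show 0 ≤ π / (2 * n) by positivity]) h₂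
  rcases le_total (chebRootAngle n k) (π / 2) with h | h
  · exact hjordan _ hlo h
  · rw [← sin_pi_sub]
    exact hjordan _ (by linarith) (by linarith)

namespace Polynomial.Chebyshev

theorem T_real_eq_C_mul_prod (n : ℕ) :
    T ℝ n = Polynomial.C (2 ^ (n - 1)) *
      ∏ k ∈ Finset.range n, (X - Polynomial.C (cos (chebRootAngle n k))) := by
  have hinj : Set.InjOn (fun k : ℕ => cos ((2 * k + 1) * π / (2 * n))) (Finset.range n) :=
    (Finset.range n).nodup_map_iff_injOn.mp (roots_T_real_nodup n)
  have hcard : Multiset.card (T ℝ n).roots = (T ℝ n).natDegree := by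
    rw [roots_T_real, Finset.card_val, card_image_of_injOn hinj]; simp
  conv_lhs => rw [← C_leadingCoeff_mul_prod_multiset_X_sub_C hcard]
  rw [leadingCoeff_T, Int.natAbs_natCast, roots_T_real, ← Finset.prod_eq_multiset_prod,
    prod_image hinj]
  rfl

theorem eval_derivative_T_real_cos_mul_sin (n : ℕ) (θ : ℝ) :
    (derivative (T ℝ n)).eval (cos θ) * sin θ = n * sin (n * θ) := by
  have h := U_real_cos θ ((n : ℤ) - 1)
  push_cast at h
  rw [sub_add_cancel] at h
  rw [T_derivative_eq_U, eval_mul, mul_assoc, h]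
  simp

end Polynomial.Chebyshev

theorem chebClosedNode_eq_mul (a : ℝ) (m : ℕ) (i : Fin m) :
    chebClosedNode a m i = a * chebClosedNode 1 m i := by
  unfold chebClosedNode
  split_ifs <;> ring

theorem lagrangeFund_eq_lagrangeFund_one {a : ℝ} (ha : a ≠ 0) (m : ℕ) (i : Fin m) (t : ℝ) :
    lagrangeFund a m i t = lagrangeFund 1 m i (t / a) := by
  unfold lagrangeFund
  refine prod_congr rfl fun j _ => ?_
  rw [chebClosedNode_eq_mul a m i, chebClosedNode_eq_mul a m j, ← mul_sub,
    show t - a * chebClosedNode 1 m j = a * (t / a - chebClosedNode 1 m j) by field_simp,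
    mul_div_mul_left _ _ ha]

section Nodes

variable (a : ℝ) (n : ℕ)

theorem chebClosedNode_zero : chebClosedNode a (n + 2) 0 = -a := by
  simp [chebClosedNode]

theorem chebClosedNode_last : chebClosedNode a (n + 2) (Fin.last (n + 1)) = a := by
  simp [chebClosedNode]

theorem chebClosedNode_castSucc_succ (j : Fin n) :
    chebClosedNode a (n + 2) j.castSucc.succ = a * cos (chebRootAngle n j) := by
  have hj := j.isLt
  rw [chebClosedNode, if_neg (by simp), if_neg (by simp; omega), chebRootAngle, Fin.val_succ,
    Fin.val_castSucc]
  push_cast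
  ring_nf

end Nodes

theorem chebClosedNode_one_cases (n : ℕ) (i : Fin (n + 2)) :
    chebClosedNode 1 (n + 2) i = 1 ∨ chebClosedNode 1 (n + 2) i = -1 ∨
      ∃ k < n, chebClosedNode 1 (n + 2) i = cos (chebRootAngle n k) := by
  induction i using Fin.cases with
  | zero => simp [chebClosedNode_zero]
  | succ j =>
    induction j using Fin.lastCases with
    | last => simp [Fin.succ_last, chebClosedNode_last]
    | cast j => exact .inr (.inr ⟨j, j.isLt, by rw [chebClosedNode_castSucc_succ, one_mul]⟩)

theorem nodal_chebClosedNode (n : ℕ) :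
    Lagrange.nodal univ (chebClosedNode 1 (n + 2))
      = C (2 ^ (n - 1))⁻¹ * ((X ^ 2 - 1) * Chebyshev.T ℝ n) := by
  rw [Lagrange.nodal, Fin.prod_univ_succ, Fin.prod_univ_castSucc, Chebyshev.T_real_eq_C_mul_prod,
    ← Fin.prod_univ_eq_prod_range]
  simp only [chebClosedNode_zero, chebClosedNode_castSucc_succ, Fin.succ_last, chebClosedNode_last,
    one_mul]
  rw [mul_left_comm (X ^ 2 - 1), ← mul_assoc (C _), ← C_mul, inv_mul_cancel₀ (by positivity), C_1,
    one_mul, map_neg, map_one]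
  ring

theorem eval_derivative_X_sq_sub_one_mul (p : ℝ[X]) (x : ℝ) :
    (derivative ((X ^ 2 - 1) * p)).eval x
      = 2 * x * p.eval x + (x ^ 2 - 1) * (derivative p).eval x := by
  simp only [derivative_mul, derivative_sub, derivative_X_pow, derivative_one, eval_add, eval_mul,
    eval_sub, eval_pow, eval_X, eval_one, eval_zero, eval_C]
  ring

theorem abs_eval_X_sq_sub_one_mul_T_le_of_sq_eq_one (n : ℕ) {x t : ℝ} (hx : x = 1 ∨ x = -1)
    (ht : t ∈ Set.Icc (-1 : ℝ) 1) :
    |((X ^ 2 - 1) * Chebyshev.T ℝ n).eval t|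
      ≤ |(derivative ((X ^ 2 - 1) * Chebyshev.T ℝ n)).eval x * (t - x)| := by
  have hTx : |(Chebyshev.T ℝ n).eval x| = 1 := by
    rcases hx with rfl | rfl <;> simp
  have hx2 : x ^ 2 = 1 := by rcases hx with rfl | rfl <;> norm_num
  have htx : |t + x| ≤ 2 := by
    rw [abs_le]; rcases hx with rfl | rfl <;> constructor <;> linarith [ht.1, ht.2]
  have hTt : |(Chebyshev.T ℝ n).eval t| ≤ 1 := Chebyshev.abs_eval_T_real_le_one n (abs_le.2 ht)
  rw [eval_derivative_X_sq_sub_one_mul, hx2, sub_self, zero_mul, add_zero, eval_mul]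
  calc |(X ^ 2 - 1 : ℝ[X]).eval t * (Chebyshev.T ℝ n).eval t|
      = |t + x| * |(Chebyshev.T ℝ n).eval t| * |t - x| := by
        rw [← abs_mul, ← abs_mul]
        congr 1
        simp only [eval_sub, eval_pow, eval_X, eval_one]
        linear_combination (Chebyshev.T ℝ n).eval t * hx2
    _ ≤ 2 * 1 * |t - x| := by gcongr
    _ = |2 * x * (Chebyshev.T ℝ n).eval x * (t - x)| := by
        rw [abs_mul, abs_mul, abs_mul, hTx, abs_two]
        rcases hx with rfl | rfl <;> norm_num

theorem abs_eval_X_sq_sub_one_mul_T_le_of_chebRoot {n k : ℕ} (hk : k < n) {t : ℝ}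
    (ht : t ∈ Set.Icc (-1 : ℝ) 1) :
    |((X ^ 2 - 1) * Chebyshev.T ℝ n).eval t|
      ≤ 2 * n * |(derivative ((X ^ 2 - 1) * Chebyshev.T ℝ n)).eval (cos (chebRootAngle n k))
          * (t - cos (chebRootAngle n k))| := by
  set θ := chebRootAngle n k
  have hn : n ≠ 0 := Nat.ne_zero_of_lt hk
  have hθ : θ ∈ Set.Icc 0 π := chebRootAngle_mem_Icc_zero_pi hk
  have hsinθ : 0 ≤ sin θ := sin_nonneg_of_nonneg_of_le_pi hθ.1 hθ.2
  have hcosnθ : cos (n * θ) = 0 := cos_nat_mul_chebRootAngle hn k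
  have hsinnθ : |sin (n * θ)| = 1 := by
    have := sin_sq_add_cos_sq (n * θ)
    rw [hcosnθ] at this
    rw [← abs_one, ← sq_eq_sq_iff_abs_eq_abs]; linarith
  have hderiv : |(derivative ((X ^ 2 - 1) * Chebyshev.T ℝ n)).eval (cos θ)| = n * sin θ := by
    rw [eval_derivative_X_sq_sub_one_mul, Chebyshev.T_real_cos, Int.cast_natCast, hcosnθ,
      mul_zero, zero_add, ← neg_sub, ← sin_sq, neg_mul, abs_neg, sq, mul_assoc,
      mul_comm (sin θ) (eval _ _), Chebyshev.eval_derivative_T_real_cos_mul_sin, abs_mul, abs_mul,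
      hsinnθ, abs_of_nonneg hsinθ, Nat.abs_cast]
    ring
  obtain ⟨φ, hφ, rfl⟩ : ∃ φ ∈ Set.Icc 0 π, cos φ = t :=
    ⟨arccos t, ⟨arccos_nonneg t, arccos_le_pi t⟩, cos_arccos ht.1 ht.2⟩
  have hnum : |((X ^ 2 - 1) * Chebyshev.T ℝ n).eval (cos φ)| = sin φ ^ 2 * |cos (n * φ)| := by
    rw [eval_mul, Chebyshev.T_real_cos, Int.cast_natCast, abs_mul]
    simp only [eval_sub, eval_pow, eval_X, eval_one]
    rw [← neg_sub, ← sin_sq, abs_neg, abs_of_nonneg (sq_nonneg _)]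
  rw [hnum, abs_mul, hderiv]
  calc sin φ ^ 2 * |cos (n * φ)| ≤ 2 * n * |cos φ - cos θ| :=
        sin_sq_mul_abs_cos_nat_mul_le hφ hθ hcosnθ
    _ ≤ 2 * n * (n * sin θ * |cos φ - cos θ|) := by
        gcongr
        exact le_mul_of_one_le_left (abs_nonneg _) (one_le_nat_mul_sin_chebRootAngle hk)

theorem abs_lagrangeFund_one_le {n : ℕ} (hn : n ≠ 0) (i : Fin (n + 2)) {t : ℝ}
    (ht : t ∈ Set.Icc (-1 : ℝ) 1) : |lagrangeFund 1 (n + 2) i t| ≤ 2 * n := by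
  set x := chebClosedNode 1 (n + 2) i
  set W : ℝ[X] := (X ^ 2 - 1) * Chebyshev.T ℝ n
  have h2n : (1 : ℝ) ≤ 2 * n := by
    have : (1 : ℝ) ≤ n := by exact_mod_cast Nat.one_le_iff_ne_zero.2 hn
    linarith
  have hW : |W.eval t| ≤ 2 * n * |(derivative W).eval x * (t - x)| := by
    rcases chebClosedNode_one_cases n i with hx | hx | ⟨k, hk, hx⟩
    · exact (abs_eval_X_sq_sub_one_mul_T_le_of_sq_eq_one n (.inl hx) ht).trans
        (le_mul_of_one_le_left (abs_nonneg _) h2n)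
    · exact (abs_eval_X_sq_sub_one_mul_T_le_of_sq_eq_one n (.inr hx) ht).trans
        (le_mul_of_one_le_left (abs_nonneg _) h2n)
    · rw [show x = cos (chebRootAngle n k) from hx]
      exact abs_eval_X_sq_sub_one_mul_T_le_of_chebRoot hk ht
  by_cases htx : t = x
  · rw [htx]
    exact (abs_prod_div_self_le_one _ _).trans h2n
  rw [lagrangeFund, Lagrange.prod_erase_sub_div_sub_eq (mem_univ i) htx, nodal_chebClosedNode,
    derivative_C_mul, eval_C_mul, eval_C_mul, mul_assoc,
    mul_div_mul_left _ _ (by positivity), abs_div]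
  exact div_le_of_le_mul₀ (abs_nonneg _) (by positivity) hW

theorem lebesgue_constant_bound :
    ∃ C : ℝ, 0 < C ∧ ∀ a : ℝ, 0 < a → ∀ m : ℕ, 4 ≤ m →
      ∀ t ∈ Set.Icc (-a) a,
        ∑ i : Fin m, |lagrangeFund a m i t| ≤ C * (m : ℝ) ^ 2 * Real.log m := by
  refine ⟨2, two_pos, fun a ha m hm t ht => ?_⟩
  obtain ⟨n, rfl⟩ : ∃ n, m = n + 2 := ⟨m - 2, by omega⟩
  have hta : t / a ∈ Set.Icc (-1 : ℝ) 1 :=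
    ⟨by rw [le_div_iff₀ ha]; linarith [ht.1], by rw [div_le_one ha]; exact ht.2⟩
  have hlog : 1 ≤ Real.log (n + 2 : ℕ) := by
    rw [Real.le_log_iff_exp_le (by positivity)]
    have : (4 : ℝ) ≤ (n + 2 : ℕ) := by exact_mod_cast hm
    linarith [Real.exp_one_lt_d9]
  calc ∑ i : Fin (n + 2), |lagrangeFund a (n + 2) i t|
      = ∑ i : Fin (n + 2), |lagrangeFund 1 (n + 2) i (t / a)| := by
        simp_rw [lagrangeFund_eq_lagrangeFund_one ha.ne']
    _ ≤ ∑ _i : Fin (n + 2), (2 * n : ℝ) :=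
        sum_le_sum fun i _ => abs_lagrangeFund_one_le (by omega) i hta
    _ ≤ 2 * ((n + 2 : ℕ) : ℝ) ^ 2 * 1 := by
        rw [sum_const, card_univ, Fintype.card_fin, nsmul_eq_mul]
        push_cast
        nlinarith
    _ ≤ 2 * ((n + 2 : ℕ) : ℝ) ^ 2 * Real.log (n + 2 : ℕ) := by gcongr
end

section
/- Let l ≥ 2 be an integer and v > 1 a real number. For N ≥ 2 define S_N = Σ_{k=0}^{N−1} ((N^v − k^v)/((k+1)^v − k^v))^{l−1}. Then there exist constants c₁, c₂ > 0 (depending only on l and v) such that for all N ≥ 2: if v > l/(l−1) then c₁·N^{v(l−1)} ≤ S_N ≤ c₂·N^{v(l−1)}; if v = l/(l−1) then c₁·N^l·ln N ≤ S_N ≤ c₂·N^l·ln N; and if v < l/(l−1) then c₁·N^l ≤ S_N ≤ c₂·N^l. -/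
/-!
Each cell ratio `(N^v - k^v) / ((k+1)^v - k^v)` is comparable to `N^v (k+1)^(1-v)`: by
Bernoulli's inequality the denominator lies between `(k+1)^(v-1)` and `v (k+1)^(v-1)`, and the
numerator lies between `N^v / 2` and `N^v` as long as `2k ≤ N`. Hence
`S_N ≍ N^(v(l-1)) ∑_{j=1}^N j^(-α)` with `α = (v-1)(l-1)`; restricting to `2k ≤ N` costs only a
constant factor because the summands decrease. The three regimes are those of the p-series, which
is bounded for `α > 1`, of order `log N` for `α = 1` and of order `N^(1-α)` for `α < 1`; these
match the three cases of the theorem because `α - 1 = (l-1)(v - l/(l-1))`.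
-/

open Finset Real

/-- The graded-mesh cell count `S_N = Σ_{k=0}^{N-1} ((N^v − k^v)/((k+1)^v − k^v))^{l−1}`. -/
noncomputable def gradedCellCount (l : ℕ) (v : ℝ) (N : ℕ) : ℝ :=
  ∑ k ∈ Finset.range N,
    (((N : ℝ) ^ v - (k : ℝ) ^ v) / (((k : ℝ) + 1) ^ v - (k : ℝ) ^ v)) ^ (l - 1)

section Increments

variable {p x : ℝ}

theorem add_one_rpow_sub_rpow_le (hp : 1 ≤ p) (hx : 0 ≤ x) :
    (x + 1) ^ p - x ^ p ≤ p * (x + 1) ^ (p - 1) := by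
  have hy : 0 < x + 1 := by linarith
  have hs : -1 ≤ -(x + 1)⁻¹ := neg_le_neg (inv_le_one_of_one_le₀ (by linarith))
  have h := one_add_mul_self_le_rpow_one_add hs hp
  rw [show 1 + -(x + 1)⁻¹ = x / (x + 1) by field_simp; ring, div_rpow hx hy.le] at h
  rw [rpow_sub_one hy.ne']
  have hyp := rpow_pos_of_pos hy p
  rw [le_div_iff₀ hyp] at h
  field_simp at h ⊢
  linarith

theorem mul_add_one_rpow_sub_one_le_add_one_rpow_sub_rpow (hp₀ : 0 ≤ p) (hp₁ : p ≤ 1)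
    (hx : 0 ≤ x) : p * (x + 1) ^ (p - 1) ≤ (x + 1) ^ p - x ^ p := by
  have hy : 0 < x + 1 := by linarith
  have hs : -1 ≤ -(x + 1)⁻¹ := neg_le_neg (inv_le_one_of_one_le₀ (by linarith))
  have h := rpow_one_add_le_one_add_mul_self hs hp₀ hp₁
  rw [show 1 + -(x + 1)⁻¹ = x / (x + 1) by field_simp; ring, div_rpow hx hy.le] at h
  rw [rpow_sub_one hy.ne']
  have hyp := rpow_pos_of_pos hy p
  rw [div_le_iff₀ hyp] at h
  field_simp at h ⊢
  linarith

theorem add_one_rpow_sub_one_le_add_one_rpow_sub_rpow (hp : 1 ≤ p) (hx : 0 ≤ x) :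
    (x + 1) ^ (p - 1) ≤ (x + 1) ^ p - x ^ p := by
  have hy : 0 < x + 1 := by linarith
  have hsplit : ∀ z : ℝ, 0 ≤ z → z ^ p = z * z ^ (p - 1) := fun z hz => by
    rw [← rpow_one_add' hz (by linarith), add_sub_cancel]
  have hle : x * x ^ (p - 1) ≤ x * (x + 1) ^ (p - 1) :=
    mul_le_mul_of_nonneg_left (rpow_le_rpow hx (by linarith) (by linarith)) hx
  rw [hsplit x hx, hsplit (x + 1) hy.le]
  linarith

end Increments

noncomputable def cellRatio (v n x : ℝ) : ℝ := (n ^ v - x ^ v) / ((x + 1) ^ v - x ^ v)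

theorem gradedCellCount_eq_sum_cellRatio (l : ℕ) (v : ℝ) (N : ℕ) :
    gradedCellCount l v N = ∑ k ∈ range N, cellRatio v N k ^ (l - 1) :=
  rfl

section CellRatio

variable {v n x : ℝ}

theorem add_one_rpow_sub_rpow_pos (hv : 1 ≤ v) (hx : 0 ≤ x) : 0 < (x + 1) ^ v - x ^ v :=
  (rpow_pos_of_pos (by linarith) _).trans_le (add_one_rpow_sub_one_le_add_one_rpow_sub_rpow hv hx)

theorem cellRatio_nonneg (hv : 1 ≤ v) (hx : 0 ≤ x) (hxn : x ≤ n) : 0 ≤ cellRatio v n x :=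
  div_nonneg (sub_nonneg.2 (rpow_le_rpow hx hxn (by linarith)))
    (add_one_rpow_sub_rpow_pos hv hx).le

theorem cellRatio_le (hv : 1 ≤ v) (hx : 0 ≤ x) (hn : 0 ≤ n) :
    cellRatio v n x ≤ n ^ v * (x + 1) ^ (1 - v) := by
  have hy : 0 < x + 1 := by linarith
  rw [cellRatio, show 1 - v = -(v - 1) by ring, rpow_neg hy.le, ← div_eq_mul_inv]
  exact div_le_div₀ (rpow_nonneg hn _) (by linarith [rpow_nonneg hx v]) (rpow_pos_of_pos hy _)
    (add_one_rpow_sub_one_le_add_one_rpow_sub_rpow hv hx)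

theorem le_cellRatio (hv : 1 ≤ v) (hx : 0 ≤ x) (h2x : 2 * x ≤ n) :
    n ^ v / (2 * v) * (x + 1) ^ (1 - v) ≤ cellRatio v n x := by
  have hy : 0 < x + 1 := by linarith
  have hn : 0 ≤ n := by linarith
  have hxv : x ^ v ≤ n ^ v / 2 := by
    have h2v : (2 : ℝ) ≤ 2 ^ v := by
      simpa using rpow_le_rpow_of_exponent_le one_le_two hv
    calc x ^ v ≤ (n / 2) ^ v := rpow_le_rpow hx (by linarith) (by linarith)
      _ = n ^ v / 2 ^ v := div_rpow hn zero_le_two v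
      _ ≤ n ^ v / 2 := div_le_div_of_nonneg_left (rpow_nonneg hn v) two_pos h2v
  rw [cellRatio, show 1 - v = -(v - 1) by ring, rpow_neg hy.le, ← div_eq_mul_inv, div_div,
    mul_assoc, ← div_div]
  exact div_le_div₀ (by linarith [rpow_nonneg hn v]) (by linarith)
    (add_one_rpow_sub_rpow_pos hv hx) (add_one_rpow_sub_rpow_le hv hx)

end CellRatio

theorem rpow_one_sub_pow {x : ℝ} (hx : 0 ≤ x) (v : ℝ) (m : ℕ) :
    (x ^ (1 - v)) ^ m = x ^ (-((v - 1) * m)) := by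
  rw [← rpow_natCast, ← rpow_mul hx]
  ring_nf

noncomputable def pSeriesSum (α : ℝ) (N : ℕ) : ℝ := ∑ k ∈ range N, ((k : ℝ) + 1) ^ (-α)

theorem Antitone.sum_range_two_mul_add_one_le {f : ℕ → ℝ} (hf : Antitone f) (M : ℕ) :
    ∑ k ∈ range (2 * M + 1), f k ≤ f 0 + 2 * ∑ k ∈ range M, f k := by
  induction M with
  | zero => simp
  | succ M ih =>
    rw [show 2 * (M + 1) + 1 = 2 * M + 1 + 1 + 1 by ring, sum_range_succ _ (2 * M + 1 + 1),
      sum_range_succ _ (2 * M + 1), sum_range_succ _ M]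
    have h₁ : f (2 * M + 1) ≤ f M := hf (by omega)
    have h₂ : f (2 * M + 1 + 1) ≤ f M := hf (by omega)
    linarith

section PSeriesSum

variable {α : ℝ} {N : ℕ}

theorem one_le_pSeriesSum (hN : N ≠ 0) : 1 ≤ pSeriesSum α N := by
  obtain ⟨n, rfl⟩ := Nat.exists_eq_succ_of_ne_zero hN
  rw [pSeriesSum, sum_range_succ']
  simpa using sum_nonneg fun k _ => rpow_nonneg (by positivity) (-α)

theorem pSeriesSum_le_three_mul_half (hα : 0 ≤ α) (hN : 2 ≤ N) :
    pSeriesSum α N ≤ 3 * pSeriesSum α (N / 2) := by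
  have hanti : Antitone fun k : ℕ => ((k : ℝ) + 1) ^ (-α) := fun i j hij =>
    rpow_le_rpow_of_nonpos (by positivity) (by gcongr) (by linarith)
  calc pSeriesSum α N ≤ pSeriesSum α (2 * (N / 2) + 1) :=
        sum_le_sum_of_subset_of_nonneg (range_subset_range.2 (by omega))
          fun _ _ _ => rpow_nonneg (by positivity) _
    _ ≤ 1 + 2 * pSeriesSum α (N / 2) := by
        simpa [pSeriesSum] using hanti.sum_range_two_mul_add_one_le (N / 2)
    _ ≤ 3 * pSeriesSum α (N / 2) := by
        linarith [one_le_pSeriesSum (α := α) (N := N / 2) (by omega)]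

theorem rpow_one_sub_le_pSeriesSum (hα : 0 ≤ α) (hN : N ≠ 0) :
    (N : ℝ) ^ (1 - α) ≤ pSeriesSum α N := by
  have hN' : (0 : ℝ) < N := by positivity
  calc (N : ℝ) ^ (1 - α) = ∑ _k ∈ range N, (N : ℝ) ^ (-α) := by
        rw [sum_const, card_range, nsmul_eq_mul, sub_eq_add_neg, rpow_add hN', rpow_one]
    _ ≤ pSeriesSum α N := sum_le_sum fun k hk =>
        rpow_le_rpow_of_nonpos (by positivity) (by exact_mod_cast mem_range.1 hk) (by linarith)

theorem pSeriesSum_le_rpow_one_sub_div (hα₀ : 0 ≤ α) (hα₁ : α < 1) (N : ℕ) :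
    pSeriesSum α N ≤ (N : ℝ) ^ (1 - α) / (1 - α) := by
  have hp : 0 < 1 - α := by linarith
  rw [le_div_iff₀ hp, pSeriesSum, sum_mul]
  calc ∑ k ∈ range N, ((k : ℝ) + 1) ^ (-α) * (1 - α)
      ≤ ∑ k ∈ range N, (((k + 1 : ℕ) : ℝ) ^ (1 - α) - (k : ℝ) ^ (1 - α)) :=
        sum_le_sum fun k _ => by
          have := mul_add_one_rpow_sub_one_le_add_one_rpow_sub_rpow hp.le (by linarith)
            (Nat.cast_nonneg k : (0 : ℝ) ≤ k)
          rw [sub_sub_cancel_left] at this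
          push_cast
          linarith
    _ = (N : ℝ) ^ (1 - α) := by
        rw [sum_range_sub (fun k : ℕ => (k : ℝ) ^ (1 - α))]
        simp [zero_rpow hp.ne']

theorem pSeriesSum_le_tsum (hα : 1 < α) (N : ℕ) :
    pSeriesSum α N ≤ ∑' k : ℕ, ((k : ℝ) + 1) ^ (-α) :=
  Summable.sum_le_tsum _ (fun _ _ => rpow_nonneg (by positivity) _) <| by
    simpa using (summable_nat_add_iff 1).2 (Real.summable_nat_rpow.2 (by linarith : -α < -1))

theorem pSeriesSum_one_eq_harmonic (N : ℕ) : pSeriesSum 1 N = harmonic N := by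
  simp [pSeriesSum, harmonic, rpow_neg_one]

end PSeriesSum

def SameOrder (f g : ℕ → ℝ) : Prop :=
  ∃ c₁ c₂ : ℝ, 0 < c₁ ∧ 0 < c₂ ∧ ∀ N : ℕ, 2 ≤ N → c₁ * g N ≤ f N ∧ f N ≤ c₂ * g N

namespace SameOrder

variable {f g h A : ℕ → ℝ}

theorem trans (hfg : SameOrder f g) (hgh : SameOrder g h) : SameOrder f h := by
  obtain ⟨c₁, c₂, hc₁, hc₂, hfg⟩ := hfg
  obtain ⟨d₁, d₂, hd₁, hd₂, hgh⟩ := hgh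
  refine ⟨c₁ * d₁, c₂ * d₂, mul_pos hc₁ hd₁, mul_pos hc₂ hd₂, fun N hN => ⟨?_, ?_⟩⟩
  · calc c₁ * d₁ * h N = c₁ * (d₁ * h N) := mul_assoc _ _ _
      _ ≤ c₁ * g N := mul_le_mul_of_nonneg_left (hgh N hN).1 hc₁.le
      _ ≤ f N := (hfg N hN).1
  · calc f N ≤ c₂ * g N := (hfg N hN).2
      _ ≤ c₂ * (d₂ * h N) := mul_le_mul_of_nonneg_left (hgh N hN).2 hc₂.le
      _ = c₂ * d₂ * h N := (mul_assoc _ _ _).symm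

theorem mul_left (hA : ∀ N, 0 ≤ A N) (hfg : SameOrder f g) :
    SameOrder (fun N => A N * f N) fun N => A N * g N := by
  obtain ⟨c₁, c₂, hc₁, hc₂, hfg⟩ := hfg
  refine ⟨c₁, c₂, hc₁, hc₂, fun N hN => ⟨?_, ?_⟩⟩
  · rw [mul_left_comm]
    exact mul_le_mul_of_nonneg_left (hfg N hN).1 (hA N)
  · rw [mul_left_comm]
    exact mul_le_mul_of_nonneg_left (hfg N hN).2 (hA N)

theorem congr_right (hfg : SameOrder f g) (hgh : ∀ N, 2 ≤ N → g N = h N) : SameOrder f h := by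
  obtain ⟨c₁, c₂, hc₁, hc₂, hfg⟩ := hfg
  exact ⟨c₁, c₂, hc₁, hc₂, fun N hN => hgh N hN ▸ hfg N hN⟩

end SameOrder

section PSeriesSumOrder

variable {α : ℝ}

theorem pSeriesSum_sameOrder_one (hα : 1 < α) : SameOrder (pSeriesSum α) fun _ => 1 := by
  have hC : 0 < ∑' k : ℕ, ((k : ℝ) + 1) ^ (-α) :=
    one_pos.trans_le ((one_le_pSeriesSum one_ne_zero).trans (pSeriesSum_le_tsum hα 1))
  refine ⟨1, _, one_pos, hC, fun N hN => ⟨?_, ?_⟩⟩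
  · simpa using one_le_pSeriesSum (α := α) (by omega)
  · simpa using pSeriesSum_le_tsum hα N

theorem pSeriesSum_one_sameOrder_log : SameOrder (pSeriesSum 1) fun N => log N := by
  have hlog2 : 0 < log 2 := log_pos one_lt_two
  refine ⟨1, 1 + (log 2)⁻¹, one_pos, by positivity, fun N hN => ⟨?_, ?_⟩⟩
  · calc 1 * log N = log N := one_mul _
      _ ≤ log ↑(N + 1) := log_le_log (by positivity) (by push_cast; linarith)
      _ ≤ pSeriesSum 1 N := pSeriesSum_one_eq_harmonic N ▸ log_add_one_le_harmonic N
  · have hlogN : 1 ≤ log N / log 2 :=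
      (one_le_div hlog2).2 (log_le_log two_pos (by exact_mod_cast hN))
    calc pSeriesSum 1 N ≤ 1 + log N := pSeriesSum_one_eq_harmonic N ▸ harmonic_le_one_add_log N
      _ ≤ (1 + (log 2)⁻¹) * log N := by
        rw [add_mul, one_mul, ← div_eq_inv_mul]
        linarith

theorem pSeriesSum_sameOrder_rpow (hα₀ : 0 ≤ α) (hα₁ : α < 1) :
    SameOrder (pSeriesSum α) fun N => (N : ℝ) ^ (1 - α) :=
  ⟨1, (1 - α)⁻¹, one_pos, inv_pos.2 (by linarith), fun N hN =>
    ⟨by simpa using rpow_one_sub_le_pSeriesSum hα₀ (by omega : N ≠ 0),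
      by simpa [div_eq_inv_mul] using pSeriesSum_le_rpow_one_sub_div hα₀ hα₁ N⟩⟩

end PSeriesSumOrder

section GradedCellCount

variable {v : ℝ}

theorem gradedCellCount_le (hv : 1 ≤ v) (l N : ℕ) :
    gradedCellCount l v N ≤ ((N : ℝ) ^ v) ^ (l - 1) * pSeriesSum ((v - 1) * (l - 1 : ℕ)) N := by
  rw [gradedCellCount_eq_sum_cellRatio, pSeriesSum, mul_sum]
  refine sum_le_sum fun k hk => ?_
  have hkN : (k : ℝ) ≤ N := by exact_mod_cast (mem_range.1 hk).le
  rw [← rpow_one_sub_pow (by positivity), ← mul_pow]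
  exact pow_le_pow_left₀ (cellRatio_nonneg hv k.cast_nonneg hkN)
    (cellRatio_le hv k.cast_nonneg N.cast_nonneg) _

theorem le_gradedCellCount (hv : 1 ≤ v) (l N : ℕ) :
    ((N : ℝ) ^ v / (2 * v)) ^ (l - 1) * pSeriesSum ((v - 1) * (l - 1 : ℕ)) (N / 2)
      ≤ gradedCellCount l v N := by
  rw [gradedCellCount_eq_sum_cellRatio, pSeriesSum, mul_sum]
  calc _ ≤ ∑ k ∈ range (N / 2), cellRatio v N k ^ (l - 1) := sum_le_sum fun k hk => by
          have h2k : 2 * (k : ℝ) ≤ N := by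
            have := mem_range.1 hk
            exact_mod_cast (by omega : 2 * k ≤ N)
          rw [← rpow_one_sub_pow (by positivity), ← mul_pow]
          refine pow_le_pow_left₀ ?_ (le_cellRatio hv k.cast_nonneg h2k) _
          have : 0 < 2 * v := by linarith
          positivity
    _ ≤ _ := sum_le_sum_of_subset_of_nonneg (range_subset_range.2 (Nat.div_le_self N 2))
          fun k hk _ => pow_nonneg (cellRatio_nonneg hv k.cast_nonneg
            (by exact_mod_cast (mem_range.1 hk).le)) _

theorem gradedCellCount_sameOrder {l : ℕ} (hl : 1 ≤ l) (hv : 1 ≤ v) :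
    SameOrder (gradedCellCount l v)
      fun N => (N : ℝ) ^ (v * ((l : ℝ) - 1)) * pSeriesSum ((v - 1) * ((l : ℝ) - 1)) N := by
  have hm : ((l - 1 : ℕ) : ℝ) = (l : ℝ) - 1 := by rw [Nat.cast_sub hl, Nat.cast_one]
  have hpow (N : ℕ) : (N : ℝ) ^ (v * ((l : ℝ) - 1)) = ((N : ℝ) ^ v) ^ (l - 1) := by
    rw [← hm, rpow_mul N.cast_nonneg, rpow_natCast]
  have hα : 0 ≤ (v - 1) * ((l : ℝ) - 1) :=
    mul_nonneg (by linarith) (by rw [← hm]; exact Nat.cast_nonneg _)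
  have hv₀ : 0 < v := by linarith
  refine ⟨(3 * (2 * v) ^ (l - 1))⁻¹, 1, by positivity, one_pos, fun N hN => ?_⟩
  dsimp only
  constructor
  · calc _ = ((N : ℝ) ^ v / (2 * v)) ^ (l - 1) * (pSeriesSum ((v - 1) * ((l : ℝ) - 1)) N / 3) := by
          rw [hpow, div_pow]
          ring
      _ ≤ ((N : ℝ) ^ v / (2 * v)) ^ (l - 1) * pSeriesSum ((v - 1) * ((l : ℝ) - 1)) (N / 2) := by
          gcongr
          linarith [pSeriesSum_le_three_mul_half hα hN]
      _ ≤ gradedCellCount l v N := hm ▸ le_gradedCellCount hv l N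
  · rw [one_mul, hpow, ← hm]
    exact gradedCellCount_le hv l N

end GradedCellCount

theorem graded_cell_count_asymptotics (l : ℕ) (hl : 2 ≤ l) (v : ℝ) (hv : 1 < v) :
    ∃ c₁ c₂ : ℝ, 0 < c₁ ∧ 0 < c₂ ∧ ∀ N : ℕ, 2 ≤ N →
      (v > l / (l - 1 : ℝ) →
        c₁ * (N : ℝ) ^ (v * (l - 1 : ℝ)) ≤ gradedCellCount l v N ∧
        gradedCellCount l v N ≤ c₂ * (N : ℝ) ^ (v * (l - 1 : ℝ))) ∧
      (v = l / (l - 1 : ℝ) →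
        c₁ * ((N : ℝ) ^ l * Real.log N) ≤ gradedCellCount l v N ∧
        gradedCellCount l v N ≤ c₂ * ((N : ℝ) ^ l * Real.log N)) ∧
      (v < l / (l - 1 : ℝ) →
        c₁ * (N : ℝ) ^ l ≤ gradedCellCount l v N ∧
        gradedCellCount l v N ≤ c₂ * (N : ℝ) ^ l) := by
  have hl₁ : (1 : ℝ) < l := by exact_mod_cast hl
  have hS := gradedCellCount_sameOrder (by omega : 1 ≤ l) hv.le
  set α := (v - 1) * ((l : ℝ) - 1) with hα
  have hα_sub_one : α - 1 = ((l : ℝ) - 1) * (v - l / (l - 1)) := by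
    rw [hα]
    field_simp [(by linarith : (l : ℝ) - 1 ≠ 0)]
    ring
  have hA (N : ℕ) : 0 ≤ (N : ℝ) ^ (v * ((l : ℝ) - 1)) := rpow_nonneg N.cast_nonneg _
  rcases lt_trichotomy v (l / (l - 1 : ℝ)) with hlt | heq | hgt
  · have hα₁ : α < 1 := by nlinarith
    obtain ⟨c₁, c₂, hc₁, hc₂, hb⟩ :=
      (hS.trans ((pSeriesSum_sameOrder_rpow (mul_nonneg (by linarith) (by linarith)) hα₁).mul_left hA)).congr_right
        (h := fun N => (N : ℝ) ^ l) fun N hN => by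
          rw [← rpow_add (by positivity), ← rpow_natCast]
          congr 1
          ring
    exact ⟨c₁, c₂, hc₁, hc₂, fun N hN =>
      ⟨fun h => absurd h hlt.not_gt, fun h => absurd h hlt.ne, fun _ => hb N hN⟩⟩
  · have hα₁ : α = 1 := by rw [← sub_eq_zero, hα_sub_one, heq, sub_self, mul_zero]
    rw [hα₁] at hS
    obtain ⟨c₁, c₂, hc₁, hc₂, hb⟩ :=
      (hS.trans (pSeriesSum_one_sameOrder_log.mul_left hA)).congr_right
        (h := fun N => (N : ℝ) ^ l * log N) fun N hN => by
          rw [← rpow_natCast]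
          congr 2
          linarith
    exact ⟨c₁, c₂, hc₁, hc₂, fun N hN =>
      ⟨fun h => absurd heq h.ne', fun _ => hb N hN, fun h => absurd heq h.ne⟩⟩
  · have hα₁ : 1 < α := by nlinarith
    obtain ⟨c₁, c₂, hc₁, hc₂, hb⟩ :=
      (hS.trans ((pSeriesSum_sameOrder_one hα₁).mul_left hA)).congr_right
        (h := fun N => (N : ℝ) ^ (v * ((l : ℝ) - 1))) fun N _ => mul_one _
    exact ⟨c₁, c₂, hc₁, hc₂, fun N hN =>
      ⟨fun _ => hb N hN, fun h => absurd h hgt.ne', fun h => absurd h hgt.not_gt⟩⟩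
end
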